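/- arXiv:2511.04978 — 4 statements merged into one kernel-verified Lean document; each statement's English description precedes it below -/
import Mathlib

section
/- Let $g$ be a finite set of size $r \geq 2$ and for each subset $S \subseteq g$ with $|S| \geq 2$ let $Y_S$ be a real number. Then $\sum_{s=2}^{r} \sum_{|S|=s, S \subseteq g} \sum_{j=0}^{r-s} \sum_{T \subseteq g \setminus S, |T|=j} (-1)^j Y_{S \cup T} = \sum_{s=2}^{r} \sum_{|S|=s, S \subseteq g} (-1)^s (s-1) Y_S$. -/
/-! Writing `U = S ∪ T`, the left side is `∑_{U ⊆ g} c_U Y_U` with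
`c_U = ∑_{S ⊆ U, |S| ≥ 2} (-1)^{|U \ S|}`. Up to the sign `(-1)^{|U|}` this is the alternating sum
over all subsets of `U`, which vanishes for `U ≠ ∅`, minus the contribution `1 - |U|` of the
subsets of size `0` and `1`; so `c_U = (-1)^{|U|} (|U| - 1)`. -/

open Finset

namespace Finset

variable {α M R : Type*} [AddCommMonoid M]

theorem sum_sum_powersetCard_eq_sum_filter_powerset (I : Finset ℕ) (s : Finset α)
    (f : ℕ → Finset α → M) :
    ∑ k ∈ I, ∑ t ∈ powersetCard k s, f k t = ∑ t ∈ s.powerset with #t ∈ I, f #t t := by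
  rw [← sum_fiberwise_of_maps_to (g := card) (t := I) fun t ht ↦ (mem_filter.1 ht).2]
  refine sum_congr rfl fun k _ ↦ ?_
  rw [filter_filter, powersetCard_eq_filter]
  exact sum_congr (by ext; grind) fun t ht ↦ by rw [(mem_filter.1 ht).2.2]

theorem sum_filter_two_le_powerset_neg_one_pow_card [CommRing R] {s : Finset α}
    (hs : s.Nonempty) : ∑ t ∈ s.powerset with 2 ≤ #t, (-1 : R) ^ #t = #s - 1 := by
  have hall : ∑ t ∈ s.powerset, (-1 : R) ^ #t = 0 := by
    simpa using congrArg (Int.cast : ℤ → R) (sum_powerset_neg_one_pow_card_of_nonempty hs)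
  have hsmall : ∑ t ∈ s.powerset with #t ∈ range 2, (-1 : R) ^ #t = 1 - #s := by
    rw [← sum_sum_powersetCard_eq_sum_filter_powerset _ _ fun k _ ↦ (-1 : R) ^ k]
    simp [sum_range_succ, sub_eq_add_neg]
  rw [← sum_filter_add_sum_filter_not _ (2 ≤ #·)] at hall
  simp only [not_le, ← mem_range] at hall
  linear_combination hall - hsmall

variable [DecidableEq α]

theorem sum_filter_two_le_powerset_neg_one_pow_card_sdiff [CommRing R] {s : Finset α}
    (hs : s.Nonempty) :
    ∑ t ∈ s.powerset with 2 ≤ #t, (-1 : R) ^ #(s \ t) = (-1) ^ #s * (#s - 1) := by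
  rw [← sum_filter_two_le_powerset_neg_one_pow_card hs, mul_sum]
  refine sum_congr rfl fun t ht ↦ ?_
  have hts := mem_powerset.1 (mem_filter.1 ht).1
  rw [← card_sdiff_add_card_eq_card hts, pow_add, mul_assoc, ← pow_add, ← two_mul, pow_mul]
  simp

theorem sum_powerset_sdiff_eq_sum_Icc {s t : Finset α} (h : s ⊆ t) (f : Finset α → M) :
    ∑ u ∈ (t \ s).powerset, f u = ∑ u ∈ Icc s t, f (u \ s) := by
  have hdisj : ∀ u ∈ (t \ s).powerset, Disjoint s u := fun u hu ↦
    disjoint_sdiff.mono_right (mem_powerset.1 hu)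
  rw [Icc_eq_image_powerset h, sum_image]
  · exact sum_congr rfl fun u hu ↦ by rw [union_sdiff_cancel_left (hdisj u hu)]
  · intro u hu v hv huv
    rw [← union_sdiff_cancel_left (hdisj u hu), ← union_sdiff_cancel_left (hdisj v hv)]
    exact congrArg (· \ s) huv

theorem sum_filter_powerset_sum_powerset_sdiff (s : Finset α) (p : Finset α → Prop)
    [DecidablePred p] (f : Finset α → Finset α → M) :
    ∑ t ∈ s.powerset with p t, ∑ u ∈ (s \ t).powerset, f t u
      = ∑ u ∈ s.powerset, ∑ t ∈ u.powerset with p t, f t (u \ t) := by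
  rw [sum_congr rfl fun t ht ↦ sum_powerset_sdiff_eq_sum_Icc
    (mem_powerset.1 (mem_filter.1 ht).1) (f t)]
  refine sum_comm' fun t u ↦ ?_
  simp only [mem_filter, mem_powerset, mem_Icc]
  grind

end Finset

theorem inclusion_exclusion_regroup_general {α : Type*} [DecidableEq α]
    (r : ℕ) (g : Finset α) (hg : g.card = r) (Y : Finset α → ℝ) :
    ∑ s ∈ Finset.Icc 2 r, ∑ S ∈ Finset.powersetCard s g, ∑ j ∈ Finset.range (r - s + 1),
        ∑ T ∈ Finset.powersetCard j (g \ S), (-1 : ℝ) ^ j * Y (S ∪ T)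
      = ∑ s ∈ Finset.Icc 2 r, ∑ S ∈ Finset.powersetCard s g,
          (-1 : ℝ) ^ s * ((s : ℝ) - 1) * Y S := by
  have hcard : ∀ S ∈ g.powerset, #S ∈ Icc 2 r ↔ 2 ≤ #S := fun S hS ↦ by
    have := card_le_card (mem_powerset.1 hS)
    rw [mem_Icc]
    omega
  have hcollapse : ∀ S ∈ g.powerset, ∑ j ∈ range (r - #S + 1),
      ∑ T ∈ powersetCard j (g \ S), (-1 : ℝ) ^ j * Y (S ∪ T)
        = ∑ T ∈ (g \ S).powerset, (-1 : ℝ) ^ #T * Y (S ∪ T) := fun S hS ↦ by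
    rw [sum_sum_powersetCard_eq_sum_filter_powerset, filter_true_of_mem]
    intro T hT
    have := card_le_card (mem_powerset.1 hT)
    rw [card_sdiff_of_subset (mem_powerset.1 hS), hg] at this
    rw [mem_range]
    omega
  rw [sum_sum_powersetCard_eq_sum_filter_powerset,
    sum_sum_powersetCard_eq_sum_filter_powerset _ _ fun s S ↦ (-1 : ℝ) ^ s * ((s : ℝ) - 1) * Y S,
    filter_congr hcard,
    sum_congr rfl fun S hS ↦ hcollapse S (mem_filter.1 hS).1,
    sum_filter_powerset_sum_powerset_sdiff, sum_filter]
  refine sum_congr rfl fun U _ ↦ ?_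
  rw [sum_congr rfl fun S hS ↦ by
    rw [union_sdiff_of_subset (mem_powerset.1 (mem_filter.1 hS).1)], ← sum_mul]
  split_ifs with hU
  · rw [sum_filter_two_le_powerset_neg_one_pow_card_sdiff (card_pos.1 (by omega))]
  · rw [filter_false_of_mem, sum_empty, zero_mul]
    intro S hS
    have := card_le_card (mem_powerset.1 hS)
    omega

theorem inclusion_exclusion_regroup {α : Type*} [DecidableEq α]
    (r : ℕ) (hr : 2 ≤ r) (g : Finset α) (hg : g.card = r) (Y : Finset α → ℝ) :
    ∑ s ∈ Finset.Icc 2 r, ∑ S ∈ Finset.powersetCard s g, ∑ j ∈ Finset.range (r - s + 1),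
        ∑ T ∈ Finset.powersetCard j (g \ S), (-1 : ℝ) ^ j * Y (S ∪ T)
      = ∑ s ∈ Finset.Icc 2 r, ∑ S ∈ Finset.powersetCard s g,
          (-1 : ℝ) ^ s * ((s : ℝ) - 1) * Y S :=
  inclusion_exclusion_regroup_general r g hg Y
end

section
/- Let $(S_i)_{i \geq 0}$ be a supermartingale with respect to a filtration $(\mathcal{F}_i)_{i \geq 0}$ with increments $\Delta S_i = S_{i+1} - S_i$. Suppose $\sum_{i \geq 0} \mathbb{E}[|\Delta S_i| \mid \mathcal{F}_i] \leq C$ almost surely and $|\Delta S_i| \leq V$ for all $i$ almost surely. Then for any $z > 0$, $\mathbb{P}[\exists i \geq 1 : S_i \geq S_0 + z] \leq \exp\big(-\frac{z^2}{2V(C+z)}\big)$. -/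
/-!
Put `θ = z / (V (C + z))` and `κ = θ² V / (2 (1 - θ V))`. For `|x| ≤ V` the Taylor bound
`exp (θ x) ≤ 1 + θ x + κ |x|`, together with `E[ΔS_n | 𝓕 n] ≤ 0`, gives
`E[exp (θ ΔS_n) | 𝓕 n] ≤ 1 + κ E[|ΔS_n| | 𝓕 n] ≤ exp (κ E[|ΔS_n| | 𝓕 n])`, so
`M n = exp (θ (S n - S 0) - κ ∑_{i<n} E[|ΔS_i| | 𝓕 i])` is a positive supermartingale with
`M 0 = 1`. On the event `S i ≥ S 0 + z` we get `M i ≥ exp (θ z - κ C)`, and `θ` is chosen so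
that `κ C = θ z / 2`, i.e. `θ z - κ C = z² / (2 V (C + z))`. Ville's maximal inequality
`P[∃ n, M n ≥ ε] ≤ E[M 0] / ε` for nonnegative supermartingales (optional stopping at the first
time `M` reaches `ε`) concludes.
-/

open Finset

theorem Real.exp_le_one_add_add_sq_div {y t : ℝ} (hy : |y| ≤ t) (ht : t < 1) :
    Real.exp y ≤ 1 + y + y ^ 2 / (2 * (1 - t)) := by
  have htaylor := (abs_sub_le_iff.1 (Real.exp_bound (hy.trans ht.le) (by norm_num : 0 < 3))).1
  -- `htaylor : exp y - (1 + y + y ^ 2 / 2) ≤ 2 / 9 * |y| ^ 3`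
  norm_num [sum_range_succ, Nat.factorial] at htaylor
  have hcube : |y| ^ 3 ≤ t * y ^ 2 := by
    rw [pow_succ', sq_abs]; exact mul_le_mul_of_nonneg_right hy (sq_nonneg _)
  have hcoef : (1 / 2 + 2 / 9 * t) * (2 * (1 - t)) ≤ 1 := by nlinarith [(abs_nonneg y).trans hy]
  have hquad : (1 / 2 + 2 / 9 * t) * y ^ 2 ≤ y ^ 2 / (2 * (1 - t)) := by
    rw [le_div_iff₀ (by linarith)]
    nlinarith [mul_le_mul_of_nonneg_right hcoef (sq_nonneg y)]
  linarith

theorem Real.exp_mul_le_one_add_mul_add_mul_abs {x V θ : ℝ} (hx : |x| ≤ V) (hθ : 0 ≤ θ)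
    (hθV : θ * V < 1) :
    Real.exp (θ * x) ≤ 1 + θ * x + θ ^ 2 * V / (2 * (1 - θ * V)) * |x| := by
  have hθx : |θ * x| ≤ θ * V := by
    rw [abs_mul, abs_of_nonneg hθ]; exact mul_le_mul_of_nonneg_left hx hθ
  have hsq : (θ * x) ^ 2 ≤ θ ^ 2 * V * |x| := by
    rw [mul_pow, ← sq_abs x, mul_assoc]
    exact mul_le_mul_of_nonneg_left (by nlinarith [abs_nonneg x]) (sq_nonneg θ)
  calc Real.exp (θ * x) ≤ 1 + θ * x + (θ * x) ^ 2 / (2 * (1 - θ * V)) :=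
        Real.exp_le_one_add_add_sq_div hθx hθV
    _ ≤ 1 + θ * x + θ ^ 2 * V * |x| / (2 * (1 - θ * V)) := by
        gcongr
    _ = _ := by ring

namespace MeasureTheory

theorem integrable_exp_mul_of_abs_le {Ω : Type*} {m0 : MeasurableSpace Ω} {μ : Measure Ω}
    [IsFiniteMeasure μ] {X : Ω → ℝ} {V : ℝ} (hX : AEStronglyMeasurable X μ)
    (hXV : ∀ᵐ ω ∂μ, |X ω| ≤ V) (θ : ℝ) : Integrable (fun ω => Real.exp (θ * X ω)) μ :=
  Integrable.of_bound (by fun_prop) (Real.exp (|θ| * V)) (by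
    filter_upwards [hXV] with ω h
    rw [Real.norm_eq_abs, abs_of_pos (Real.exp_pos _)]
    exact Real.exp_le_exp.2 ((le_abs_self _).trans (by rw [abs_mul]; gcongr)))

theorem condExp_exp_mul_le {Ω : Type*} {m m0 : MeasurableSpace Ω} {μ : Measure Ω}
    [IsFiniteMeasure μ] (hm : m ≤ m0) {X : Ω → ℝ} {V θ : ℝ} (hX : Integrable X μ)
    (hXV : ∀ᵐ ω ∂μ, |X ω| ≤ V) (hXm : μ[X | m] ≤ᵐ[μ] 0) (hθ : 0 ≤ θ) (hθV : θ * V < 1) :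
    μ[fun ω => Real.exp (θ * X ω) | m] ≤ᵐ[μ]
      fun ω => 1 + θ ^ 2 * V / (2 * (1 - θ * V)) * μ[fun ω => |X ω| | m] ω := by
  set κ := θ ^ 2 * V / (2 * (1 - θ * V))
  set B : Ω → ℝ := (fun _ => 1) + θ • X + κ • fun ω => |X ω|
  have hB : Integrable B μ := ((integrable_const 1).add (hX.smul θ)).add (hX.abs.smul κ)
  have hle : (fun ω => Real.exp (θ * X ω)) ≤ᵐ[μ] B := by
    filter_upwards [hXV] with ω h using Real.exp_mul_le_one_add_mul_add_mul_abs h hθ hθV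
  have hexp : Integrable (fun ω => Real.exp (θ * X ω)) μ :=
    hB.mono' (by fun_prop) (by
      filter_upwards [hle] with ω h
      rwa [Real.norm_eq_abs, abs_of_pos (Real.exp_pos _)])
  have hcondB : μ[B | m] =ᵐ[μ] (fun _ => 1) + θ • μ[X | m] + κ • μ[fun ω => |X ω| | m] := by
    filter_upwards [condExp_add ((integrable_const 1).add (hX.smul θ)) (hX.abs.smul κ) m,
      condExp_add (integrable_const 1) (hX.smul θ) m, condExp_smul θ X m,
      condExp_smul κ (fun ω => |X ω|) m] with ω h1 h2 h3 h4
    simp only [B, h1, Pi.add_apply, h2, h3, h4, condExp_const hm]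
  filter_upwards [condExp_mono (m := m) hexp hB hle, hcondB, hXm] with ω h1 h2 h3
  simp only [h2, Pi.add_apply, Pi.smul_apply, smul_eq_mul, Pi.zero_apply] at h1 h3
  nlinarith

theorem Supermartingale.condExp_sub_nonpos {Ω ι : Type*} {m0 : MeasurableSpace Ω}
    {μ : Measure Ω} [IsFiniteMeasure μ] [Preorder ι] {𝓕 : Filtration ι m0} {f : ι → Ω → ℝ}
    (hf : Supermartingale f 𝓕 μ) {i j : ι} (hij : i ≤ j) : μ[f j - f i | 𝓕 i] ≤ᵐ[μ] 0 := by
  filter_upwards [condExp_sub (hf.integrable j) (hf.integrable i) (𝓕 i),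
    hf.condExp_ae_le hij] with ω hsub hle
  rw [hsub, Pi.sub_apply, condExp_of_stronglyMeasurable (𝓕.le i) (hf.stronglyMeasurable i)
    (hf.integrable i)]
  exact sub_nonpos.2 hle

section Ville

variable {Ω : Type*} {m0 : MeasurableSpace Ω} {μ : Measure Ω} [IsFiniteMeasure μ]
  {𝓕 : Filtration ℕ m0} {M : ℕ → Ω → ℝ}

theorem Supermartingale.integral_stoppedValue_le (hM : Supermartingale M 𝓕 μ)
    {τ : Ω → WithTop ℕ} (hτ : IsStoppingTime 𝓕 τ) {N : ℕ} (hτN : ∀ ω, τ ω ≤ N) :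
    ∫ ω, stoppedValue M τ ω ∂μ ≤ ∫ ω, M 0 ω ∂μ := by
  have h := hM.neg.expected_stoppedValue_mono (isStoppingTime_const 𝓕 0) hτ
    (fun _ => bot_le) hτN
  simpa [stoppedValue, integral_neg] using h

theorem Supermartingale.mul_measureReal_exists_le_le (hM : Supermartingale M 𝓕 μ) (hM0 : 0 ≤ M)
    (ε : ℝ) (N : ℕ) :
    ε * μ.real {ω | ∃ n ≤ N, ε ≤ M n ω} ≤ ∫ ω, M 0 ω ∂μ := by
  set τ : Ω → WithTop ℕ := fun ω => (hittingBtwn M (Set.Ici ε) 0 N ω : ℕ)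
  have hτ : IsStoppingTime 𝓕 τ :=
    hM.stronglyAdapted.adapted.isStoppingTime_hittingBtwn measurableSet_Ici
  have hτN : ∀ ω, τ ω ≤ N := fun ω =>
    WithTop.coe_le_coe.2 <| hittingBtwn_le (u := M) (s := Set.Ici ε) (n := 0) ω
  have hsub : {ω | ∃ n ≤ N, ε ≤ M n ω} ⊆ {ω | ε ≤ stoppedValue M τ ω} :=
    fun ω ⟨n, hnN, hn⟩ => stoppedValue_hittingBtwn_mem ⟨n, ⟨Nat.zero_le n, hnN⟩, hn⟩
  rcases le_or_gt ε 0 with hε | hε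
  · exact (mul_nonpos_of_nonpos_of_nonneg hε measureReal_nonneg).trans
      (integral_nonneg (hM0 0))
  calc ε * μ.real {ω | ∃ n ≤ N, ε ≤ M n ω}
      ≤ ε * μ.real {ω | ε ≤ stoppedValue M τ ω} := by gcongr; exact measure_ne_top _ _
    _ ≤ ∫ ω, stoppedValue M τ ω ∂μ :=
        mul_meas_ge_le_integral_of_nonneg (ae_of_all _ fun ω => hM0 _ ω)
          (integrable_stoppedValue ℕ hτ hM.integrable hτN) ε
    _ ≤ ∫ ω, M 0 ω ∂μ := hM.integral_stoppedValue_le hτ hτN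

theorem Supermartingale.measure_exists_le_le (hM : Supermartingale M 𝓕 μ) (hM0 : 0 ≤ M)
    {ε : ℝ} (hε : 0 < ε) :
    μ {ω | ∃ n, ε ≤ M n ω} ≤ ENNReal.ofReal ((∫ ω, M 0 ω ∂μ) / ε) := by
  have hunion : {ω | ∃ n, ε ≤ M n ω} = ⋃ n, {ω | ε ≤ M n ω} := by ext; simp
  rw [hunion, measure_iUnion_eq_iSup_accumulate]
  refine iSup_le fun N => ?_
  have hN : Set.accumulate (fun n => {ω | ε ≤ M n ω}) N = {ω | ∃ n ≤ N, ε ≤ M n ω} := by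
    ext; simp [Set.mem_accumulate]
  rw [hN, ← ofReal_measureReal]
  exact ENNReal.ofReal_le_ofReal ((le_div_iff₀' hε).2 (hM.mul_measureReal_exists_le_le hM0 ε N))

end Ville

end MeasureTheory

open MeasureTheory

section FreedmanProcess

variable {Ω : Type*} {m0 : MeasurableSpace Ω} {μ : Measure Ω} {𝓕 : Filtration ℕ m0}
  {S : ℕ → Ω → ℝ} {V θ κ : ℝ}

noncomputable def freedmanProcess (μ : Measure Ω) (𝓕 : Filtration ℕ m0) (S : ℕ → Ω → ℝ)
    (θ κ : ℝ) (n : ℕ) (ω : Ω) : ℝ :=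
  Real.exp (θ * (S n ω - S 0 ω) -
    κ * ∑ i ∈ range n, μ[fun ω' => |S (i + 1) ω' - S i ω'| | 𝓕 i] ω)

theorem freedmanProcess_pos (n : ℕ) (ω : Ω) : 0 < freedmanProcess μ 𝓕 S θ κ n ω :=
  Real.exp_pos _

@[simp]
theorem freedmanProcess_zero : freedmanProcess μ 𝓕 S θ κ 0 = 1 := by
  ext; simp [freedmanProcess]

theorem freedmanProcess_succ (n : ℕ) :
    freedmanProcess μ 𝓕 S θ κ (n + 1) =
      (fun ω => freedmanProcess μ 𝓕 S θ κ n ω *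
        Real.exp (-(κ * μ[fun ω' => |S (n + 1) ω' - S n ω'| | 𝓕 n] ω))) *
      fun ω => Real.exp (θ * (S (n + 1) ω - S n ω)) := by
  ext ω
  simp only [freedmanProcess, Pi.mul_apply, ← Real.exp_add, sum_range_succ]
  ring_nf

theorem stronglyAdapted_freedmanProcess (hS : StronglyAdapted 𝓕 S) :
    StronglyAdapted 𝓕 (freedmanProcess μ 𝓕 S θ κ) := fun n =>
  Real.continuous_exp.comp_stronglyMeasurable <|
    (stronglyMeasurable_const.mul <| (hS n).sub <| (hS 0).mono <| 𝓕.mono n.zero_le).sub <|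
      stronglyMeasurable_const.mul <| Finset.stronglyMeasurable_fun_sum _ fun _ hi =>
        stronglyMeasurable_condExp.mono <| 𝓕.mono (mem_range.1 hi).le

theorem freedmanProcess_le_exp (hθ : 0 ≤ θ) (hκ : 0 ≤ κ)
    (hbdd : ∀ i, ∀ᵐ ω ∂μ, |S (i + 1) ω - S i ω| ≤ V) (n : ℕ) :
    ∀ᵐ ω ∂μ, freedmanProcess μ 𝓕 S θ κ n ω ≤ Real.exp (θ * (n * V)) := by
  have hcompensator : ∀ i, 0 ≤ᵐ[μ] μ[fun ω => |S (i + 1) ω - S i ω| | 𝓕 i] := fun i =>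
    condExp_nonneg (ae_of_all _ fun ω => abs_nonneg _)
  filter_upwards [ae_all_iff.2 hbdd, ae_all_iff.2 hcompensator] with ω hΔ hA
  have hdrift : S n ω - S 0 ω ≤ n * V := by
    rw [← sum_range_sub (fun i => S i ω)]
    simpa using sum_le_sum (s := range n) fun i _ => (le_abs_self _).trans (hΔ i)
  have hA_sum := sum_nonneg fun i (_ : i ∈ range n) => hA i
  refine Real.exp_le_exp.2 ?_
  nlinarith [mul_le_mul_of_nonneg_left hdrift hθ, mul_nonneg hκ hA_sum]

theorem integrable_freedmanProcess [IsFiniteMeasure μ] (hS : StronglyAdapted 𝓕 S) (hθ : 0 ≤ θ)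
    (hκ : 0 ≤ κ) (hbdd : ∀ i, ∀ᵐ ω ∂μ, |S (i + 1) ω - S i ω| ≤ V) (n : ℕ) :
    Integrable (freedmanProcess μ 𝓕 S θ κ n) μ :=
  Integrable.of_bound
    (((stronglyAdapted_freedmanProcess hS) n).mono (𝓕.le n)).aestronglyMeasurable _ <| by
      filter_upwards [freedmanProcess_le_exp hθ hκ hbdd n] with ω h
      rwa [Real.norm_eq_abs, abs_of_pos (freedmanProcess_pos n ω)]

theorem condExp_freedmanProcess_succ_le [IsFiniteMeasure μ] (hS : Supermartingale S 𝓕 μ)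
    (hV : 0 ≤ V) (hbdd : ∀ i, ∀ᵐ ω ∂μ, |S (i + 1) ω - S i ω| ≤ V) (hθ : 0 ≤ θ)
    (hθV : θ * V < 1) (n : ℕ) :
    μ[freedmanProcess μ 𝓕 S θ (θ ^ 2 * V / (2 * (1 - θ * V))) (n + 1) | 𝓕 n] ≤ᵐ[μ]
      freedmanProcess μ 𝓕 S θ (θ ^ 2 * V / (2 * (1 - θ * V))) n := by
  set κ := θ ^ 2 * V / (2 * (1 - θ * V))
  have hκ : 0 ≤ κ := div_nonneg (by positivity) (by linarith)
  set A := μ[fun ω => |S (n + 1) ω - S n ω| | 𝓕 n]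
  have hΔ : Integrable (fun ω => S (n + 1) ω - S n ω) μ := (hS.integrable _).sub (hS.integrable _)
  have hstep := condExp_exp_mul_le (𝓕.le n) hΔ (hbdd n) (hS.condExp_sub_nonpos n.le_succ) hθ hθV
  have hprefactor : StronglyMeasurable[𝓕 n]
      fun ω => freedmanProcess μ 𝓕 S θ κ n ω * Real.exp (-(κ * A ω)) :=
    (stronglyAdapted_freedmanProcess hS.stronglyAdapted n).mul <|
      Real.continuous_exp.comp_stronglyMeasurable (stronglyMeasurable_const.mul
        stronglyMeasurable_condExp).neg
  have hpull := condExp_mul_of_stronglyMeasurable_left hprefactor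
    (freedmanProcess_succ (μ := μ) n ▸
      integrable_freedmanProcess hS.stronglyAdapted hθ hκ hbdd (n + 1))
    (integrable_exp_mul_of_abs_le hΔ.aestronglyMeasurable (hbdd n) θ)
  rw [freedmanProcess_succ]
  filter_upwards [hpull, hstep, condExp_nonneg (m := 𝓕 n) (μ := μ) (ae_of_all _ fun ω =>
    abs_nonneg (S (n + 1) ω - S n ω))] with ω hpullω hstepω hA
  have hM := (freedmanProcess_pos (μ := μ) (𝓕 := 𝓕) (S := S) (θ := θ) (κ := κ) n ω).le
  rw [hpullω, Pi.mul_apply]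
  calc freedmanProcess μ 𝓕 S θ κ n ω * Real.exp (-(κ * A ω)) *
        μ[fun ω => Real.exp (θ * (S (n + 1) ω - S n ω)) | 𝓕 n] ω
      ≤ freedmanProcess μ 𝓕 S θ κ n ω * Real.exp (-(κ * A ω)) * (1 + κ * A ω) := by
        gcongr
    _ ≤ freedmanProcess μ 𝓕 S θ κ n ω * (Real.exp (-(κ * A ω)) * Real.exp (κ * A ω)) := by
        rw [mul_assoc]; gcongr; linarith [Real.add_one_le_exp (κ * A ω)]
    _ = freedmanProcess μ 𝓕 S θ κ n ω := by rw [← Real.exp_add]; simp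

theorem supermartingale_freedmanProcess [IsFiniteMeasure μ] (hS : Supermartingale S 𝓕 μ)
    (hV : 0 ≤ V) (hbdd : ∀ i, ∀ᵐ ω ∂μ, |S (i + 1) ω - S i ω| ≤ V) (hθ : 0 ≤ θ)
    (hθV : θ * V < 1) :
    Supermartingale (freedmanProcess μ 𝓕 S θ (θ ^ 2 * V / (2 * (1 - θ * V)))) 𝓕 μ :=
  supermartingale_nat (stronglyAdapted_freedmanProcess hS.stronglyAdapted)
    (integrable_freedmanProcess hS.stronglyAdapted hθ
      (div_nonneg (by positivity) (by linarith)) hbdd)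
    (condExp_freedmanProcess_succ_le hS hV hbdd hθ hθV)

end FreedmanProcess

/-- Freedman's martingale concentration inequality (simplified form, Lemma 4.3.1):
for a supermartingale `S` with `∑_i E[|ΔS_i| | 𝓕_i] ≤ C` a.s. and `|ΔS_i| ≤ V` a.s.,
`P[∃ i ≥ 1, S_i ≥ S_0 + z] ≤ exp(-z²/(2V(C+z)))`. -/
theorem freedman_supermartingale_concentration
    {Ω : Type*} {m0 : MeasurableSpace Ω} {μ : Measure Ω} [IsProbabilityMeasure μ]
    (𝓕 : Filtration ℕ m0) (S : ℕ → Ω → ℝ)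
    (hS : Supermartingale S 𝓕 μ)
    (C V : ℝ) (hC : 0 < C) (hV : 0 < V)
    (hsum : ∀ᵐ ω ∂μ, ∀ N : ℕ,
      ∑ i ∈ Finset.range N, (μ[fun ω' => |S (i + 1) ω' - S i ω'| | 𝓕 i]) ω ≤ C)
    (hbdd : ∀ i : ℕ, ∀ᵐ ω ∂μ, |S (i + 1) ω - S i ω| ≤ V)
    (z : ℝ) (hz : 0 < z) :
    μ {ω | ∃ i : ℕ, 1 ≤ i ∧ S 0 ω + z ≤ S i ω}
      ≤ ENNReal.ofReal (Real.exp (-(z ^ 2 / (2 * V * (C + z))))) := by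
  set θ := z / (V * (C + z))
  have hθV : θ * V = z / (C + z) := by simp only [θ]; field_simp
  have hθV_lt : θ * V < 1 := by rw [hθV, div_lt_one (by linarith)]; linarith
  set κ := θ ^ 2 * V / (2 * (1 - θ * V))
  have hexponent : θ * z - κ * C = z ^ 2 / (2 * V * (C + z)) := by
    have h1 : 1 - θ * V = C / (C + z) := by rw [hθV]; field_simp; ring
    simp only [κ, h1, θ]; field_simp; ring
  set M := freedmanProcess μ 𝓕 S θ κ
  have hM := supermartingale_freedmanProcess hS hV.le hbdd (by positivity) hθV_lt
  have hevent : {ω | ∃ i : ℕ, 1 ≤ i ∧ S 0 ω + z ≤ S i ω}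
      ≤ᵐ[μ] {ω | ∃ n, Real.exp (θ * z - κ * C) ≤ M n ω} := by
    filter_upwards [hsum] with ω hω ⟨i, _, hi⟩
    refine ⟨i, Real.exp_le_exp.2 (sub_le_sub ?_ ?_)⟩
    · gcongr; linarith
    · gcongr; exact hω i
  calc μ {ω | ∃ i : ℕ, 1 ≤ i ∧ S 0 ω + z ≤ S i ω}
      ≤ μ {ω | ∃ n, Real.exp (θ * z - κ * C) ≤ M n ω} := measure_mono_ae hevent
    _ ≤ ENNReal.ofReal ((∫ ω, M 0 ω ∂μ) / Real.exp (θ * z - κ * C)) :=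
        hM.measure_exists_le_le (fun n ω => (freedmanProcess_pos n ω).le) (Real.exp_pos _)
    _ = ENNReal.ofReal (Real.exp (-(z ^ 2 / (2 * V * (C + z))))) := by
        simp [M, hexponent, Real.exp_neg]
end

section
/- Let $L$ and $K$ be $r$-uniform linear cycles with $e_L, e_K \geq 3$ edges respectively, let $\bar{L} \subset L$ with $k := e_{\bar L} \leq e_L - 2$ edges and $\bar{K} \subset K$ with $e_K - 2$ edges, and suppose there exist distinct edges $f', h' \in L \setminus \bar{L}$ and distinct edges $g', h' \in K \setminus \bar{K}$ (so $\bar K \cup \{g', h'\} = K$), where possibly $f' = g'$ but $f' \neq h'$ and $g' \neq h'$. Set $H = \bar{L} \cup \bar{K}$ on vertex set $V(L) \cup V(K)$. Then for every subhypergraph $\widetilde{H}$ with $f' \cup g' \cup h' \subseteq V(\widetilde{H})$, $\widetilde{H} \subseteq H$ (as edge sets, with $V(\widetilde H) \subseteq V(H)$ the spanned vertices together with $f' \cup g' \cup h'$), one has $[v_H - (r-1)e_H] - [v_{\widetilde{H}} - (r-1)e_{\widetilde{H}}] \leq (r-1)(e_L - k) - r - 1$. -/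
/-- `L` is an `r`-uniform linear cycle: its edges admit a cyclic ordering in which
consecutive edges share exactly one vertex and nonconsecutive edges are disjoint. -/
def IsLinCycle {V : Type*} [DecidableEq V] (r : ℕ) (L : Finset (Finset V)) : Prop :=
  ∃ e : ℕ → Finset V,
    L = (Finset.range L.card).image e ∧
    (∀ j < L.card, ∀ j' < L.card, j ≠ j' → e j ≠ e j') ∧
    (∀ j < L.card, (e j).card = r) ∧
    (∀ j < L.card, (e j ∩ e ((j + 1) % L.card)).card = 1) ∧
    (∀ j < L.card, ∀ j' < L.card, j ≠ j' → j' ≠ (j + 1) % L.card →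
      j ≠ (j' + 1) % L.card → e j ∩ e j' = ∅)


/-- Lower bound: a subfamily of the cycle avoiding index `g` spans many vertices. -/
lemma lincyc_sub_lb {V : Type*} [DecidableEq V] {r m : ℕ} {e : ℕ → Finset V}
    (hcard : ∀ j < m, (e j).card = r)
    (hcons : ∀ j < m, (e j ∩ e ((j + 1) % m)).card = 1)
    (hdisj : ∀ j < m, ∀ j' < m, j ≠ j' → j' ≠ (j + 1) % m → j ≠ (j' + 1) % m →
      e j ∩ e j' = ∅)
    {g : ℕ} (hg : g < m) :
    ∀ S : Finset ℕ, S ⊆ Finset.range m → g ∉ S → S.Nonempty →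
      r * S.card + 1 ≤ (S.biUnion e).card + S.card := by
  have hm : 0 < m := lt_of_le_of_lt (Nat.zero_le g) hg
  have hsucc_inj : ∀ a < m, ∀ b < m, (a + 1) % m = (b + 1) % m → a = b := by
    intro a ha b hb h
    rcases Nat.lt_or_ge (a + 1) m with h1 | h1 <;>
      rcases Nat.lt_or_ge (b + 1) m with h2 | h2
    · rw [Nat.mod_eq_of_lt h1, Nat.mod_eq_of_lt h2] at h; omega
    · have hb1 : b + 1 = m := by omega
      rw [Nat.mod_eq_of_lt h1, hb1, Nat.mod_self] at h; omega
    · have ha1 : a + 1 = m := by omega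
      rw [Nat.mod_eq_of_lt h2, ha1, Nat.mod_self] at h; omega
    · omega
  intro S
  induction S using Finset.strongInduction with
  | _ S ih =>
    intro hSm hgS hSne
    -- find j ∈ S whose cyclic successor is not in S
    have hstep : ∃ j ∈ S, (j + 1) % m ∉ S := by
      by_contra hcl
      push_neg at hcl
      obtain ⟨j0, hj0⟩ := hSne
      have hj0m : j0 < m := Finset.mem_range.mp (hSm hj0)
      have horb : ∀ k, (j0 + k) % m ∈ S := by
        intro k
        induction k with
        | zero => simpa [Nat.mod_eq_of_lt hj0m] using hj0
        | succ k ihk =>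
          have := hcl _ ihk
          rwa [Nat.mod_add_mod] at this
      have := horb (g + m - j0)
      have heq : (j0 + (g + m - j0)) % m = g := by
        have : j0 + (g + m - j0) = g + m := by omega
        rw [this, Nat.add_mod_right, Nat.mod_eq_of_lt hg]
      rw [heq] at this
      exact hgS this
    obtain ⟨j, hjS, hnext⟩ := hstep
    have hjm : j < m := Finset.mem_range.mp (hSm hjS)
    set S' := S.erase j with hS'
    set jp := (j + (m - 1)) % m with hjp
    have hjpm : jp < m := Nat.mod_lt _ hm
    have hjpj : (jp + 1) % m = j := by
      rw [hjp, Nat.mod_add_mod]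
      have : j + (m - 1) + 1 = j + m := by omega
      rw [this, Nat.add_mod_right, Nat.mod_eq_of_lt hjm]
    have hsub : e j ∩ S'.biUnion e ⊆ e jp ∩ e j := by
      intro x hx
      rw [Finset.mem_inter, Finset.mem_biUnion] at hx
      obtain ⟨hxj, j', hj'S', hxj'⟩ := hx
      have hj'j : j' ≠ j := Finset.ne_of_mem_erase hj'S'
      have hj'S : j' ∈ S := Finset.mem_of_mem_erase hj'S'
      have hj'm : j' < m := Finset.mem_range.mp (hSm hj'S)
      by_cases h1 : j' = (j + 1) % m
      · exact absurd (h1 ▸ hj'S) hnext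
      by_cases h2 : j = (j' + 1) % m
      · have : j' = jp := hsucc_inj j' hj'm jp hjpm (by rw [hjpj, ← h2])
        rw [Finset.mem_inter]
        exact ⟨this ▸ hxj', hxj⟩
      · have := hdisj j hjm j' hj'm (Ne.symm hj'j) h1 h2
        have : x ∈ e j ∩ e j' := Finset.mem_inter.mpr ⟨hxj, hxj'⟩
        rw [hdisj j hjm j' hj'm (Ne.symm hj'j) h1 h2] at this
        exact absurd this (Finset.notMem_empty x)
    have hint : (e j ∩ S'.biUnion e).card ≤ 1 := by
      have h1 : (e jp ∩ e j).card = 1 := by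
        have := hcons jp hjpm
        rwa [hjpj] at this
      calc (e j ∩ S'.biUnion e).card ≤ (e jp ∩ e j).card := Finset.card_le_card hsub
        _ = 1 := h1
    have hU : S.biUnion e = e j ∪ S'.biUnion e := by
      conv_lhs => rw [← Finset.insert_erase hjS]
      rw [Finset.biUnion_insert]
    have hcardU : (S.biUnion e).card + (e j ∩ S'.biUnion e).card
        = r + (S'.biUnion e).card := by
      rw [hU, Finset.card_union_add_card_inter, hcard j hjm]
    rcases S'.eq_empty_or_nonempty with hS'e | hS'ne
    · have hS1 : S = {j} := by
        have h := Finset.insert_erase hjS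
        rw [← hS', hS'e] at h
        simpa using h.symm
      rw [hS1]
      simp [hcard j hjm]
    · have hS'sub : S' ⊂ S := Finset.erase_ssubset hjS
      have ihS' := ih S' hS'sub (Finset.Subset.trans (Finset.erase_subset _ _) hSm)
        (fun h => hgS (Finset.mem_of_mem_erase h)) hS'ne
      have hc : S.card = S'.card + 1 := by
        rw [hS', Finset.card_erase_of_mem hjS]
        have : 1 ≤ S.card := Finset.card_pos.mpr hSne
        omega
      have hexp : r * S.card = r * S'.card + r := by rw [hc, Nat.mul_succ]
      linarith

/-- Upper bound: the whole cycle spans at most `(r-1)m + 1` vertices. -/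
lemma lincyc_full_ub {V : Type*} [DecidableEq V] {r m : ℕ} {e : ℕ → Finset V}
    (hcard : ∀ j < m, (e j).card = r)
    (hcons : ∀ j < m, (e j ∩ e ((j + 1) % m)).card = 1) (hm : 1 ≤ m) :
    ((Finset.range m).biUnion e).card + m ≤ r * m + 1 := by
  suffices h : ∀ i, 1 ≤ i → i ≤ m → ((Finset.range i).biUnion e).card + i ≤ r * i + 1 by
    exact h m hm le_rfl
  intro i
  induction i with
  | zero => omega
  | succ i ihi =>
    intro _ him
    rcases Nat.eq_or_lt_of_le (show 1 ≤ i + 1 from by omega) with h1 | h1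
    · have : i = 0 := by omega
      subst this
      simp [hcard 0 (by omega)]
    · have hi1 : 1 ≤ i := by omega
      have hiim : i < m := by omega
      have ih := ihi hi1 (by omega)
      have hrange : Finset.range (i + 1) = insert i (Finset.range i) :=
        Finset.range_add_one
      set prev := (Finset.range i).biUnion e with hprev
      have hU : (Finset.range (i + 1)).biUnion e = e i ∪ prev := by
        rw [hrange, Finset.biUnion_insert]
      -- e i shares a vertex with e (i-1) ⊆ prev
      have hsub : e i \ prev ⊆ e i \ e (i - 1) := by
        apply Finset.sdiff_subset_sdiff le_rfl
        intro x hx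
        rw [hprev, Finset.mem_biUnion]
        exact ⟨i - 1, Finset.mem_range.mpr (by omega), hx⟩
      have hi1i : (i - 1 + 1) % m = i := by
        have : i - 1 + 1 = i := by omega
        rw [this, Nat.mod_eq_of_lt hiim]
      have hinter : (e (i - 1) ∩ e i).card = 1 := by
        have := hcons (i - 1) (by omega)
        rwa [hi1i] at this
      have hsd : (e i \ e (i - 1)).card + 1 ≤ r := by
        have h2 := Finset.card_inter_add_card_sdiff (e i) (e (i - 1))
        rw [hcard i hiim] at h2
        have h3 : (e i ∩ e (i - 1)).card = 1 := by
          rw [Finset.inter_comm]; exact hinter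
        omega
      have hcardU : ((Finset.range (i + 1)).biUnion e).card ≤ (e i \ prev).card + prev.card := by
        rw [hU, ← Finset.sdiff_union_self_eq_union]
        exact Finset.card_union_le _ _
      have := Finset.card_le_card hsub
      have hexp : r * (i + 1) = r * i + r := by ring
      omega

/-- Any nonempty subfamily of a linear cycle has deficiency at least that of the full cycle. -/
lemma lincyc_family_bound {V : Type*} [DecidableEq V] {r : ℕ} {L : Finset (Finset V)}
    (hL : ∃ e : ℕ → Finset V,
      L = (Finset.range L.card).image e ∧
      (∀ j < L.card, ∀ j' < L.card, j ≠ j' → e j ≠ e j') ∧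
      (∀ j < L.card, (e j).card = r) ∧
      (∀ j < L.card, (e j ∩ e ((j + 1) % L.card)).card = 1) ∧
      (∀ j < L.card, ∀ j' < L.card, j ≠ j' → j' ≠ (j + 1) % L.card →
        j ≠ (j' + 1) % L.card → e j ∩ e j' = ∅))
    {F : Finset (Finset V)} (hF : F ⊆ L) (hFne : F.Nonempty) :
    ((L.biUnion id).card : ℤ) - ((r : ℤ) - 1) * (L.card : ℤ)
      ≤ ((F.biUnion id).card : ℤ) - ((r : ℤ) - 1) * (F.card : ℤ) := by
  classical
  obtain ⟨e, hLim, hinj, hcard, hcons, hdisj⟩ := hL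
  set m := L.card with hm
  have hmpos : 0 < m := Finset.card_pos.mpr (hFne.mono hF)
  by_cases hFL : F = L
  · rw [hFL]
  · -- F is a proper subfamily
    set S := (Finset.range m).filter (fun j => e j ∈ F) with hS
    have hFS : F = S.image e := by
      apply Finset.Subset.antisymm
      · intro f hf
        have : f ∈ L := hF hf
        rw [hLim] at this
        obtain ⟨j, hj, hje⟩ := Finset.mem_image.mp this
        rw [Finset.mem_image]
        exact ⟨j, Finset.mem_filter.mpr ⟨hj, hje ▸ hf⟩, hje⟩
      · intro f hf
        obtain ⟨j, hj, hje⟩ := Finset.mem_image.mp hf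
        exact hje ▸ (Finset.mem_filter.mp hj).2
    have hScard : S.card = F.card := by
      rw [hFS]
      refine (Finset.card_image_of_injOn ?_).symm
      intro a ha b hb hab
      by_contra hne
      exact hinj a (Finset.mem_range.mp (Finset.mem_filter.mp ha).1)
        b (Finset.mem_range.mp (Finset.mem_filter.mp hb).1) hne hab
    have hFbi : F.biUnion id = S.biUnion e := by
      rw [hFS]
      ext x
      simp [Finset.mem_biUnion]
    have hLbi : L.biUnion id = (Finset.range m).biUnion e := by
      rw [hLim]
      ext x
      simp [Finset.mem_biUnion]
    have hSne : S.Nonempty := by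
      rw [← Finset.card_pos, hScard, Finset.card_pos]; exact hFne
    obtain ⟨g, hgm, hgS⟩ : ∃ g, g < m ∧ g ∉ S := by
      by_contra hc
      push_neg at hc
      apply hFL
      apply Finset.Subset.antisymm hF
      intro f hfL
      rw [hLim] at hfL
      obtain ⟨j, hj, hje⟩ := Finset.mem_image.mp hfL
      have := hc j (Finset.mem_range.mp hj)
      exact hje ▸ (Finset.mem_filter.mp this).2
    have hlb := lincyc_sub_lb hcard hcons hdisj hgm S (Finset.filter_subset _ _) hgS hSne
    have hub := lincyc_full_ub hcard hcons hmpos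
    rw [hFbi, hLbi, hScard] at *
    have hlb' : (r : ℤ) * (F.card : ℤ) + 1 ≤ ((S.biUnion e).card : ℤ) + (F.card : ℤ) := by
      rw [hScard] at hlb; exact_mod_cast hlb
    have hub' : (((Finset.range m).biUnion e).card : ℤ) + (m : ℤ) ≤ (r : ℤ) * (m : ℤ) + 1 := by
      exact_mod_cast hub
    linarith
lemma finset_biUnion_union {α β : Type*} [DecidableEq α] [DecidableEq β]
    (s t : Finset α) (f : α → Finset β) :
    (s ∪ t).biUnion f = s.biUnion f ∪ t.biUnion f := by
  ext x
  simp only [Finset.mem_biUnion, Finset.mem_union]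
  constructor
  · rintro ⟨a, ha | ha, hxa⟩
    · exact Or.inl ⟨a, ha, hxa⟩
    · exact Or.inr ⟨a, ha, hxa⟩
  · rintro (⟨a, ha, hxa⟩ | ⟨a, ha, hxa⟩)
    · exact ⟨a, Or.inl ha, hxa⟩
    · exact ⟨a, Or.inr ha, hxa⟩

set_option maxHeartbeats 1000000 in
/-- Inequality (5.11): for overlapping configurations built from two linear cycles
`L`, `K` sharing the edge `h'`, the vertex-edge deficiency of `H = L̄ ∪ K̄` relative
to any subfamily `H̃` is at most `(r-1)(e_L - k) - r - 1`. -/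
theorem overlapping_cycles_deficiency_bound {V : Type*} [DecidableEq V]
    (r : ℕ) (hr : 3 ≤ r) (L K : Finset (Finset V))
    (hL : IsLinCycle r L) (hK : IsLinCycle r K)
    (hLe : 3 ≤ L.card) (hKe : 3 ≤ K.card)
    (Lb Kb : Finset (Finset V)) (hLb : Lb ⊆ L) (hKb : Kb ⊆ K)
    (hk : Lb.card ≤ L.card - 2) (hKbcard : Kb.card = K.card - 2)
    (f' g' h' : Finset V)
    (hf'L : f' ∈ L) (hf'Lb : f' ∉ Lb) (hh'L : h' ∈ L) (hh'Lb : h' ∉ Lb)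
    (hfh : f' ≠ h')
    (hg'K : g' ∈ K) (hg'Kb : g' ∉ Kb) (hh'K : h' ∈ K) (hh'Kb : h' ∉ Kb)
    (hgh : g' ≠ h') (hKfull : Kb ∪ {g', h'} = K) :
    ∀ Ht : Finset (Finset V), Ht ⊆ Lb ∪ Kb →
      (((L.biUnion id ∪ K.biUnion id).card : ℤ) - ((r : ℤ) - 1) * ((Lb ∪ Kb).card : ℤ))
          - (((Ht.biUnion id ∪ f' ∪ g' ∪ h').card : ℤ) - ((r : ℤ) - 1) * (Ht.card : ℤ))
        ≤ ((r : ℤ) - 1) * ((L.card : ℤ) - (Lb.card : ℤ)) - (r : ℤ) - 1 := by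
  classical
  intro Ht hHt
  set X := L.biUnion id with hX
  set Y := K.biUnion id with hY
  set A := Ht ∩ Lb with hA
  set B := Ht ∩ Kb with hB
  set W := (Lb ∩ Kb) \ Ht with hW
  set P := A.biUnion id ∪ f' ∪ h' with hP
  set Q := B.biUnion id ∪ g' ∪ h' with hQ
  have hHtAB : Ht = A ∪ B := by
    rw [hA, hB, ← Finset.inter_union_distrib_left]
    exact (Finset.inter_eq_left.mpr hHt).symm
  -- the vertex set of H̃ together with f',g',h' is P ∪ Q
  have hPQ : Ht.biUnion id ∪ f' ∪ g' ∪ h' = P ∪ Q := by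
    rw [hP, hQ, hHtAB, finset_biUnion_union]
    ext x
    simp only [Finset.mem_union]
    tauto
  -- basic counting identities
  have z1 := Finset.card_union_add_card_inter X Y
  have z2 := Finset.card_union_add_card_inter Lb Kb
  have z4 := Finset.card_union_add_card_inter P Q
  have z5 : Ht.card + (A ∩ B).card = A.card + B.card := by
    rw [hHtAB]; exact Finset.card_union_add_card_inter A B
  have z6 : (A ∩ B).card + W.card = (Lb ∩ Kb).card := by
    have hAB : A ∩ B = (Lb ∩ Kb) ∩ Ht := by
      rw [hA, hB]; ext x; simp only [Finset.mem_inter]; tauto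
    rw [hAB, hW, Finset.card_inter_add_card_sdiff]
  -- z7 : the overlap bound |P∩Q| + |P ∪ ⋃W| ≤ |X∩Y| + |P|
  have hPX : P ⊆ X := by
    rw [hP, hX]
    apply Finset.union_subset
    apply Finset.union_subset
    · exact Finset.biUnion_subset_biUnion_of_subset_left id
        (Finset.Subset.trans (Finset.inter_subset_right) hLb)
    · intro x hx
      exact Finset.mem_biUnion.mpr ⟨f', hf'L, hx⟩
    · intro x hx
      exact Finset.mem_biUnion.mpr ⟨h', hh'L, hx⟩
  have hQY : Q ⊆ Y := by
    rw [hQ, hY]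
    apply Finset.union_subset
    apply Finset.union_subset
    · exact Finset.biUnion_subset_biUnion_of_subset_left id
        (Finset.Subset.trans (Finset.inter_subset_right) hKb)
    · intro x hx
      exact Finset.mem_biUnion.mpr ⟨g', hg'K, hx⟩
    · intro x hx
      exact Finset.mem_biUnion.mpr ⟨h', hh'K, hx⟩
  have hWXY : W.biUnion id ⊆ X ∩ Y := by
    intro x hx
    obtain ⟨w, hwW, hxw⟩ := Finset.mem_biUnion.mp hx
    have hwLK : w ∈ Lb ∩ Kb := (Finset.mem_sdiff.mp hwW).1
    rw [Finset.mem_inter]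
    constructor
    · exact Finset.mem_biUnion.mpr ⟨w, hLb (Finset.mem_inter.mp hwLK).1, hxw⟩
    · exact Finset.mem_biUnion.mpr ⟨w, hKb (Finset.mem_inter.mp hwLK).2, hxw⟩
  have z7 : (P ∩ Q).card + (P ∪ W.biUnion id).card ≤ (X ∩ Y).card + P.card := by
    have hdisj2 : Disjoint (P ∩ Q) (W.biUnion id \ P) :=
      Finset.disjoint_left.mpr fun x hx hx' =>
        (Finset.mem_sdiff.mp hx').2 (Finset.mem_inter.mp hx).1
    have hsub2 : (P ∩ Q) ∪ (W.biUnion id \ P) ⊆ X ∩ Y := by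
      apply Finset.union_subset
      · exact Finset.inter_subset_inter hPX hQY
      · exact Finset.Subset.trans (Finset.sdiff_subset) hWXY
    have h1 : (P ∩ Q).card + (W.biUnion id \ P).card ≤ (X ∩ Y).card := by
      rw [← Finset.card_union_of_disjoint hdisj2]
      exact Finset.card_le_card hsub2
    have h2 : (P ∪ W.biUnion id).card = P.card + (W.biUnion id \ P).card := by
      rw [← Finset.union_sdiff_self_eq_union, Finset.card_union_of_disjoint Finset.disjoint_sdiff]
    omega
  -- z8 : the L-side family A ∪ W ∪ {f', h'}
  have hAWdisj : Disjoint A W := Finset.disjoint_left.mpr fun x hxA hxW =>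
    (Finset.mem_sdiff.mp hxW).2 (Finset.mem_inter.mp hxA).1
  have hALb : A ⊆ Lb := Finset.inter_subset_right
  have hWLb : W ⊆ Lb := Finset.Subset.trans Finset.sdiff_subset Finset.inter_subset_left
  have hfh'disj : Disjoint (A ∪ W) ({f', h'} : Finset (Finset V)) := by
    rw [Finset.disjoint_right]
    intro x hx hx'
    rcases Finset.mem_insert.mp hx with h | h
    · subst h
      rcases Finset.mem_union.mp hx' with h | h
      · exact hf'Lb (hALb h)
      · exact hf'Lb (hWLb h)
    · rw [Finset.mem_singleton] at h
      subst h
      rcases Finset.mem_union.mp hx' with h | h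
      · exact hh'Lb (hALb h)
      · exact hh'Lb (hWLb h)
  have hFL : (A ∪ W ∪ {f', h'} : Finset (Finset V)) ⊆ L := by
    apply Finset.union_subset
    · exact Finset.union_subset (Finset.Subset.trans hALb hLb) (Finset.Subset.trans hWLb hLb)
    · intro x hx
      rcases Finset.mem_insert.mp hx with h | h
      · exact h ▸ hf'L
      · rw [Finset.mem_singleton] at h; exact h ▸ hh'L
  have hFLcard : (A ∪ W ∪ {f', h'} : Finset (Finset V)).card = A.card + W.card + 2 := by
    rw [Finset.card_union_of_disjoint hfh'disj, Finset.card_union_of_disjoint hAWdisj,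
      Finset.card_insert_of_notMem (by simp [hfh]), Finset.card_singleton]
  have hFLbi : (A ∪ W ∪ {f', h'} : Finset (Finset V)).biUnion id = P ∪ W.biUnion id := by
    rw [hP]
    ext x
    simp only [Finset.mem_biUnion, Finset.mem_union, Finset.mem_insert,
      Finset.mem_singleton, id]
    constructor
    · rintro ⟨a, ha, hxa⟩
      rcases ha with (ha | ha) | (ha | ha)
      · exact Or.inl (Or.inl (Or.inl ⟨a, ha, hxa⟩))
      · exact Or.inr ⟨a, ha, hxa⟩
      · exact Or.inl (Or.inl (Or.inr (ha ▸ hxa)))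
      · exact Or.inl (Or.inr (ha ▸ hxa))
    · rintro (((⟨a, ha, hxa⟩ | hx) | hx) | ⟨a, ha, hxa⟩)
      · exact ⟨a, Or.inl (Or.inl ha), hxa⟩
      · exact ⟨f', Or.inr (Or.inl rfl), hx⟩
      · exact ⟨h', Or.inr (Or.inr rfl), hx⟩
      · exact ⟨a, Or.inl (Or.inr ha), hxa⟩
  have z8' := lincyc_family_bound hL hFL ⟨f', by simp⟩
  rw [hFLcard, hFLbi] at z8'
  -- z9 : the K-side family B ∪ {g', h'}
  have hBKb : B ⊆ Kb := Finset.inter_subset_right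
  have hgh'disj : Disjoint B ({g', h'} : Finset (Finset V)) := by
    rw [Finset.disjoint_right]
    intro x hx hx'
    rcases Finset.mem_insert.mp hx with h | h
    · exact hg'Kb (h ▸ hBKb hx')
    · rw [Finset.mem_singleton] at h
      exact hh'Kb (h ▸ hBKb hx')
  have hFK : (B ∪ {g', h'} : Finset (Finset V)) ⊆ K := by
    apply Finset.union_subset (Finset.Subset.trans hBKb hKb)
    intro x hx
    rcases Finset.mem_insert.mp hx with h | h
    · exact h ▸ hg'K
    · rw [Finset.mem_singleton] at h; exact h ▸ hh'K
  have hFKcard : (B ∪ {g', h'} : Finset (Finset V)).card = B.card + 2 := by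
    rw [Finset.card_union_of_disjoint hgh'disj,
      Finset.card_insert_of_notMem (by simp [hgh]), Finset.card_singleton]
  have hFKbi : (B ∪ {g', h'} : Finset (Finset V)).biUnion id = Q := by
    rw [hQ]
    ext x
    simp only [Finset.mem_biUnion, Finset.mem_union, Finset.mem_insert,
      Finset.mem_singleton, id]
    constructor
    · rintro ⟨a, ha, hxa⟩
      rcases ha with ha | (ha | ha)
      · exact Or.inl (Or.inl ⟨a, ha, hxa⟩)
      · exact Or.inl (Or.inr (ha ▸ hxa))
      · exact Or.inr (ha ▸ hxa)
    · rintro ((⟨a, ha, hxa⟩ | hx) | hx)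
      · exact ⟨a, Or.inl ha, hxa⟩
      · exact ⟨g', Or.inr (Or.inl rfl), hx⟩
      · exact ⟨h', Or.inr (Or.inr rfl), hx⟩
  have z9' := lincyc_family_bound hK hFK ⟨g', by simp⟩
  rw [hFKcard, hFKbi] at z9'
  -- cast everything to ℤ
  have z10 : (Kb.card : ℤ) = (K.card : ℤ) - 2 := by
    have h2 : Kb.card + 2 = K.card := by omega
    omega
  rw [hPQ]
  have z1' : ((X ∪ Y).card : ℤ) + ((X ∩ Y).card : ℤ) = (X.card : ℤ) + (Y.card : ℤ) := by
    exact_mod_cast z1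
  have z2' : ((r : ℤ) - 1) * ((Lb ∪ Kb).card : ℤ) + ((r : ℤ) - 1) * ((Lb ∩ Kb).card : ℤ)
      = ((r : ℤ) - 1) * (Lb.card : ℤ) + ((r : ℤ) - 1) * (Kb.card : ℤ) := by
    have : ((Lb ∪ Kb).card : ℤ) + ((Lb ∩ Kb).card : ℤ) = (Lb.card : ℤ) + (Kb.card : ℤ) := by
      exact_mod_cast z2
    linear_combination ((r : ℤ) - 1) * this
  have z4' : ((P ∪ Q).card : ℤ) + ((P ∩ Q).card : ℤ) = (P.card : ℤ) + (Q.card : ℤ) := by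
    exact_mod_cast z4
  have z5' : ((r : ℤ) - 1) * (Ht.card : ℤ) + ((r : ℤ) - 1) * ((A ∩ B).card : ℤ)
      = ((r : ℤ) - 1) * (A.card : ℤ) + ((r : ℤ) - 1) * (B.card : ℤ) := by
    have : (Ht.card : ℤ) + ((A ∩ B).card : ℤ) = (A.card : ℤ) + (B.card : ℤ) := by
      exact_mod_cast z5
    linear_combination ((r : ℤ) - 1) * this
  have z6' : ((r : ℤ) - 1) * ((A ∩ B).card : ℤ) + ((r : ℤ) - 1) * (W.card : ℤ)
      = ((r : ℤ) - 1) * ((Lb ∩ Kb).card : ℤ) := by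
    have : ((A ∩ B).card : ℤ) + (W.card : ℤ) = ((Lb ∩ Kb).card : ℤ) := by
      exact_mod_cast z6
    linear_combination ((r : ℤ) - 1) * this
  have z7' : ((P ∩ Q).card : ℤ) + ((P ∪ W.biUnion id).card : ℤ)
      ≤ ((X ∩ Y).card : ℤ) + (P.card : ℤ) := by exact_mod_cast z7
  have z10' : ((r : ℤ) - 1) * (Kb.card : ℤ) = ((r : ℤ) - 1) * ((K.card : ℤ) - 2) := by
    linear_combination ((r : ℤ) - 1) * z10
  have hr' : (3 : ℤ) ≤ (r : ℤ) := by exact_mod_cast hr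
  push_cast at z8' z9' ⊢
  linarith [z1', z2', z4', z5', z6', z7', z8', z9', z10', hr']
end

section
/- Fix integers $r \geq 3$, $\ell \geq 3$ and let $L$ be a linear $r$-graph with $e_L = i$ edges for some $3 \leq i \leq \ell$ spanning at most $(r-1)i$ vertices, such that $L$ contains no subhypergraph $G \subsetneq L$ with $3 \leq e_G < i$ edges on at most $(r-1)e_G$ vertices. Then $L$ is isomorphic to the $r$-uniform linear cycle $C_i^r$; in particular $v_L = (r-1)i$ exactly. -/
/-!
Deleting an edge from `L` leaves a configuration with more than `r - 1` vertices per edge (by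
minimality of `L`, or by linearity when only two edges remain), while `L` itself has at most
`r - 1` per edge; so every edge shares at least two vertices with the other edges. A Berge path
that cannot be extended must then close up, so Berge cycles exist. In a shortest one, two
nonconsecutive edges cannot meet (a common vertex would cut out a shorter cycle) and, by
linearity, consecutive edges meet only in their link vertex. Hence the shortest cycle is a
linear cycle spanning exactly `(r - 1) c` vertices, and minimality of `L` forces it to be `L`.
-/

/-- A hypergraph is linear if any two distinct edges share at most one vertex. -/
def IsLinearHG {V : Type*} [DecidableEq V] (G : Finset (Finset V)) : Prop :=
  ∀ e ∈ G, ∀ f ∈ G, e ≠ f → (e ∩ f).card ≤ 1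

open Finset

lemma injOn_update_Iio {α : Type*} {f : ℕ → α} {n : ℕ} {a : α}
    (hf : Set.InjOn f (Set.Iio n)) (ha : ∀ j < n, f j ≠ a) :
    Set.InjOn (Function.update f n a) (Set.Iio (n + 1)) := by
  intro j hj k hk hjk
  simp only [Set.mem_Iio, Function.update_apply] at hj hk hjk
  split_ifs at hjk with hjn hkn hkn
  · omega
  · exact absurd hjk.symm (ha k (by omega))
  · exact absurd hjk (ha j (by omega))
  · exact hf (show j < n by omega) (show k < n by omega) hjk

lemma Nat.not_modEq_add_one {c : ℕ} (hc : 2 ≤ c) (j : ℕ) : ¬ j ≡ j + 1 [MOD c] := by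
  intro h
  have := Nat.le_of_dvd one_pos (by simpa using (Nat.modEq_iff_dvd' (Nat.le_succ j)).1 h)
  omega

section Counting

variable {V : Type*} [DecidableEq V] {L G : Finset (Finset V)} {r : ℕ}

lemma IsLinearHG.mono (hlin : IsLinearHG L) (hGL : G ⊆ L) : IsLinearHG G :=
  fun e he f hf => hlin e (hGL he) f (hGL hf)

lemma IsLinearHG.card_biUnion_gt_of_card_eq_two (hlin : IsLinearHG G)
    (hunif : ∀ e ∈ G, e.card = r) (hG : G.card = 2) :
    (r - 1) * G.card < (G.biUnion id).card := by
  obtain ⟨e, g, heg, rfl⟩ := card_eq_two.1 hG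
  have he := hunif e (by simp)
  have hg := hunif g (by simp)
  have hinter := hlin e (by simp) g (by simp) heg
  have hunion := card_union_add_card_inter e g
  rcases Nat.eq_zero_or_pos r with rfl | hr
  · exact absurd ((card_eq_zero.1 he).trans (card_eq_zero.1 hg).symm) heg
  · simp only [hG, biUnion_insert, id, singleton_biUnion]
    omega

lemma two_le_card_inter_biUnion_erase {f : Finset V} (hf : f ∈ L) (hfr : f.card = r)
    (hL : (L.biUnion id).card ≤ (r - 1) * L.card)
    (hLf : (r - 1) * (L.card - 1) < ((L.erase f).biUnion id).card) :
    2 ≤ (f ∩ (L.erase f).biUnion id).card := by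
  have hunion : L.biUnion id = f ∪ (L.erase f).biUnion id := by
    conv_lhs => rw [← insert_erase hf]
    rw [biUnion_insert, id]
  obtain ⟨m, hm⟩ : ∃ m, L.card = m + 1 :=
    ⟨_, (Nat.succ_pred_eq_of_pos (card_pos.2 ⟨f, hf⟩)).symm⟩
  have := card_union_add_card_inter f ((L.erase f).biUnion id)
  rw [← hunion] at this
  have := card_le_card (inter_subset_left (s₁ := f) (s₂ := (L.erase f).biUnion id))
  rw [hm, Nat.mul_succ] at hL
  rw [hm, Nat.add_sub_cancel] at hLf
  omega

lemma sub_one_mul_lt_card_biUnion_erase (hlin : IsLinearHG L) (hunif : ∀ e ∈ L, e.card = r)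
    (hL : 3 ≤ L.card)
    (hmin : ∀ G : Finset (Finset V), G ⊆ L → G ≠ L → 3 ≤ G.card → G.card < L.card →
      ¬ ((G.biUnion id).card ≤ (r - 1) * G.card))
    {f : Finset V} (hf : f ∈ L) : (r - 1) * (L.card - 1) < ((L.erase f).biUnion id).card := by
  have herase : (L.erase f).card = L.card - 1 := card_erase_of_mem hf
  rw [← herase]
  rcases (show L.card = 3 ∨ 4 ≤ L.card by omega) with h3 | h4
  · exact (hlin.mono (erase_subset f L)).card_biUnion_gt_of_card_eq_two
      (fun e he => hunif e (mem_of_mem_erase he)) (by omega)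
  · exact not_le.1 <| hmin _ (erase_subset f L) (fun h => by rw [h] at herase; omega)
      (by omega) (by omega)

end Counting

section Berge

variable {V : Type*} [DecidableEq V] {L : Finset (Finset V)}

/-- `n` counts the links `w 0, …, w (n - 1)`; the path has the `n + 1` edges `F 0, …, F n`. -/
structure IsBergePath (L : Finset (Finset V)) (n : ℕ) (F : ℕ → Finset V) (w : ℕ → V) :
    Prop where
  edge_mem : ∀ j ≤ n, F j ∈ L
  injOn_edge : Set.InjOn F (Set.Iio (n + 1))
  injOn_vertex : Set.InjOn w (Set.Iio n)
  vertex_mem : ∀ j < n, w j ∈ F j ∩ F (j + 1)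

/-- A Berge cycle of length `c`, with indices read modulo `c`: `F` and `w` are `c`-periodic,
so that rotating the cycle is a shift of the index. -/
structure IsBergeCycle (L : Finset (Finset V)) (c : ℕ) (F : ℕ → Finset V) (w : ℕ → V) :
    Prop where
  two_le : 2 ≤ c
  periodic_edge : Function.Periodic F c
  periodic_vertex : Function.Periodic w c
  edge_mem : ∀ j, F j ∈ L
  modEq_of_edge_eq : ∀ {j k}, F j = F k → j ≡ k [MOD c]
  modEq_of_vertex_eq : ∀ {j k}, w j = w k → j ≡ k [MOD c]
  vertex_mem : ∀ j, w j ∈ F j ∩ F (j + 1)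

namespace IsBergePath

variable {n : ℕ} {F : ℕ → Finset V} {w : ℕ → V}

lemma succ_le_card (hp : IsBergePath L n F w) : n + 1 ≤ L.card := by
  simpa using card_le_card_of_injOn F
    (fun j hj => hp.edge_mem j (Nat.lt_succ_iff.1 (mem_range.1 hj)))
    (by simpa [Set.InjOn] using hp.injOn_edge)

lemma mono (hp : IsBergePath L n F w) {m : ℕ} (hmn : m ≤ n) : IsBergePath L m F w where
  edge_mem j hj := hp.edge_mem j (hj.trans hmn)
  injOn_edge := hp.injOn_edge.mono (Set.Iio_subset_Iio (by omega))
  injOn_vertex := hp.injOn_vertex.mono (Set.Iio_subset_Iio hmn)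
  vertex_mem j hj := hp.vertex_mem j (by omega)

lemma shift (hp : IsBergePath L n F w) {s : ℕ} (hs : s ≤ n) :
    IsBergePath L (n - s) (fun j => F (s + j)) (fun j => w (s + j)) where
  edge_mem j hj := hp.edge_mem _ (by omega)
  injOn_edge j hj k hk h := by
    simp only [Set.mem_Iio] at hj hk
    have := hp.injOn_edge (show s + j < n + 1 by omega) (show s + k < n + 1 by omega) h
    omega
  injOn_vertex j hj k hk h := by
    simp only [Set.mem_Iio] at hj hk
    have := hp.injOn_vertex (show s + j < n by omega) (show s + k < n by omega) h
    omega
  vertex_mem j hj := hp.vertex_mem (s + j) (by omega)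

lemma snoc (hp : IsBergePath L n F w) {g : Finset V} (hg : g ∈ L) (hFg : ∀ j ≤ n, F j ≠ g)
    {x : V} (hxn : x ∈ F n) (hxg : x ∈ g) (hxw : ∀ t < n, w t ≠ x) :
    IsBergePath L (n + 1) (Function.update F (n + 1) g) (Function.update w n x) where
  edge_mem j hj := by
    rcases eq_or_ne j (n + 1) with rfl | hjn
    · rwa [Function.update_self]
    · rw [Function.update_of_ne hjn]; exact hp.edge_mem j (by omega)
  injOn_edge := injOn_update_Iio hp.injOn_edge fun j hj => hFg j (by omega)
  injOn_vertex := injOn_update_Iio hp.injOn_vertex hxw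
  vertex_mem j hj := by
    rw [Function.update_of_ne (show j ≠ n + 1 by omega)]
    rcases eq_or_ne j n with rfl | hjn
    · simpa using ⟨hxn, hxg⟩
    · rw [Function.update_of_ne hjn, Function.update_of_ne (show j + 1 ≠ n + 1 by omega)]
      exact hp.vertex_mem j (by omega)

lemma close (hp : IsBergePath L n F w) (hn : 1 ≤ n) {x : V} (hxn : x ∈ F n) (hx0 : x ∈ F 0)
    (hxw : ∀ t < n, w t ≠ x) :
    IsBergeCycle L (n + 1) (fun j => F (j % (n + 1)))
      (fun j => Function.update w n x (j % (n + 1))) where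
  two_le := by omega
  periodic_edge j := by simp only [Nat.add_mod_right]
  periodic_vertex j := by simp only [Nat.add_mod_right]
  edge_mem j := hp.edge_mem _ (Nat.lt_succ_iff.1 (Nat.mod_lt _ (by omega)))
  modEq_of_edge_eq h := hp.injOn_edge (Nat.mod_lt _ (by omega)) (Nat.mod_lt _ (by omega)) h
  modEq_of_vertex_eq h :=
    injOn_update_Iio hp.injOn_vertex hxw (Nat.mod_lt _ (by omega)) (Nat.mod_lt _ (by omega)) h
  vertex_mem j := by
    have hsucc : (j + 1) % (n + 1) = (j % (n + 1) + 1) % (n + 1) := by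
      rw [Nat.add_mod, Nat.mod_eq_of_lt (show 1 < n + 1 by omega)]
    rcases (Nat.lt_add_one_iff.1 (Nat.mod_lt j (by omega : 0 < n + 1))).lt_or_eq with hj | hj
    · rw [hsucc, Nat.mod_eq_of_lt (show j % (n + 1) + 1 < n + 1 by omega),
        Function.update_of_ne hj.ne]
      exact hp.vertex_mem _ hj
    · rw [hsucc, hj, Nat.mod_self, Function.update_self]
      exact mem_inter.2 ⟨hxn, hx0⟩

lemma exists_isBergeCycle_of_mem (hp : IsBergePath L n F w) {s : ℕ} (hs : s < n) {x : V}
    (hxs : x ∈ F s) (hxn : x ∈ F n) (hxw : ∀ t, s ≤ t → t < n → w t ≠ x) :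
    ∃ c F' w', IsBergeCycle L c F' w' :=
  ⟨_, _, _, (hp.shift hs.le).close (by omega) (by rwa [Nat.add_sub_cancel' hs.le]) (by simpa)
    fun t ht => hxw (s + t) (by omega) (by omega)⟩

lemma exists_extend (hp : IsBergePath L n F w)
    (hdeg : 2 ≤ (F n ∩ (L.erase (F n)).biUnion id).card)
    (hno : ¬ ∃ c F' w', IsBergeCycle L c F' w') :
    ∃ F' w', IsBergePath L (n + 1) F' w' := by
  -- a shared vertex of `F n` other than its link to `F (n - 1)`
  obtain ⟨x, hx, hxw⟩ :=
    exists_mem_ne (s := F n ∩ (L.erase (F n)).biUnion id) (by omega) (w (n - 1))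
  obtain ⟨hxF, hxU⟩ := mem_inter.1 hx
  obtain ⟨g, hg, hxg⟩ := mem_biUnion.1 hxU
  obtain ⟨hgF, hgL⟩ := mem_erase.1 hg
  have hxw' : ∀ t < n, w t ≠ x := by
    rintro t ht rfl
    have htn : t + 1 < n := by
      by_contra! htn
      exact hxw (by rw [show t = n - 1 by omega])
    refine hno (hp.exists_isBergeCycle_of_mem htn (mem_inter.1 (hp.vertex_mem t ht)).2 hxF
      fun t' _ ht'n h => ?_)
    have := hp.injOn_vertex (show t' < n from ht'n) (show t < n from ht) h
    omega
  have hFg : ∀ j ≤ n, F j ≠ g := by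
    rintro s hs rfl
    have hsn : s < n := lt_of_le_of_ne hs (by rintro rfl; exact hgF rfl)
    exact hno (hp.exists_isBergeCycle_of_mem hsn hxg hxF fun t _ htn => hxw' t htn)
  exact ⟨_, _, hp.snoc hgL hFg hxF hxg hxw'⟩

end IsBergePath

lemma exists_isBergeCycle (hne : L.Nonempty)
    (hdeg : ∀ f ∈ L, 2 ≤ (f ∩ (L.erase f).biUnion id).card) :
    ∃ c F w, IsBergeCycle L c F w := by
  by_contra hno
  have hpath : ∀ n, ∃ F w, IsBergePath L n F w := by
    intro n
    induction n with
    | zero =>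
      obtain ⟨f, hf⟩ := hne
      obtain ⟨x, -⟩ := card_pos.1 (show 0 < (f ∩ (L.erase f).biUnion id).card by
        have := hdeg f hf; omega)
      exact ⟨fun _ => f, fun _ => x, fun _ _ => hf, fun j hj k hk _ => by simp_all,
        fun j hj => by simp at hj, fun j hj => by simp at hj⟩
    | succ n ih =>
      obtain ⟨F, w, hp⟩ := ih
      exact hp.exists_extend (hdeg _ (hp.edge_mem n le_rfl)) hno
  obtain ⟨F, w, hp⟩ := hpath L.card
  have := hp.succ_le_card
  omega

lemma exists_shortest_isBergeCycle (hne : L.Nonempty)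
    (hdeg : ∀ f ∈ L, 2 ≤ (f ∩ (L.erase f).biUnion id).card) :
    ∃ c F w, IsBergeCycle L c F w ∧ ∀ m F' w', IsBergeCycle L m F' w' → c ≤ m := by
  classical
  have hex := exists_isBergeCycle hne hdeg
  obtain ⟨F, w, hcyc⟩ := Nat.find_spec hex
  exact ⟨_, F, w, hcyc, fun m F' w' h => Nat.find_min' hex ⟨F', w', h⟩⟩

namespace IsBergeCycle

variable {c : ℕ} {F : ℕ → Finset V} {w : ℕ → V}

lemma isBergePath (h : IsBergeCycle L c F w) : IsBergePath L (c - 1) F w where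
  edge_mem j _ := h.edge_mem j
  injOn_edge j hj k hk hjk := (h.modEq_of_edge_eq hjk).eq_of_lt_of_lt
    (by have := h.two_le; simp at hj; omega) (by have := h.two_le; simp at hk; omega)
  injOn_vertex j hj k hk hjk := (h.modEq_of_vertex_eq hjk).eq_of_lt_of_lt
    (by simp at hj; omega) (by simp at hk; omega)
  vertex_mem j _ := h.vertex_mem j

lemma rotate (h : IsBergeCycle L c F w) (k : ℕ) :
    IsBergeCycle L c (fun j => F (j + k)) (fun j => w (j + k)) where
  two_le := h.two_le
  periodic_edge := h.periodic_edge.add_const k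
  periodic_vertex := h.periodic_vertex.add_const k
  edge_mem j := h.edge_mem _
  modEq_of_edge_eq hjk := Nat.ModEq.add_right_cancel' k (h.modEq_of_edge_eq hjk)
  modEq_of_vertex_eq hjk := Nat.ModEq.add_right_cancel' k (h.modEq_of_vertex_eq hjk)
  vertex_mem j := by simpa only [add_right_comm j 1 k] using h.vertex_mem (j + k)

lemma edge_eq_of_modEq (h : IsBergeCycle L c F w) {j k : ℕ} (hjk : j ≡ k [MOD c]) :
    F j = F k := by
  rw [← h.periodic_edge.map_mod_nat j, ← h.periodic_edge.map_mod_nat k, hjk]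

lemma exists_shortcut (h : IsBergeCycle L c F w) {d : ℕ} (hd0 : 0 < d) (hdc : d < c) {x : V}
    (hx0 : x ∈ F 0) (hxd : x ∈ F d) (hxw : ∀ t < d, w t ≠ x) :
    ∃ F' w', IsBergeCycle L (d + 1) F' w' :=
  ⟨_, _, (h.isBergePath.mono (by omega)).close hd0 hxd hx0 hxw⟩

/-- In a shortest Berge cycle two edges `F 0` and `F d` can only meet if they are consecutive:
otherwise one of the two arcs between them, closed up through a common vertex, is shorter. -/
lemma eq_one_or_eq_sub_one_of_mem_inter (h : IsBergeCycle L c F w)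
    (hshort : ∀ m F' w', IsBergeCycle L m F' w' → c ≤ m) {d : ℕ} (hd0 : 0 < d) (hdc : d < c)
    {x : V} (hx0 : x ∈ F 0) (hxd : x ∈ F d) : d = 1 ∨ d = c - 1 := by
  by_cases hw : ∃ t < d, w t = x
  · obtain ⟨t, htd, rfl⟩ := hw
    have hxc : w t ∈ F (c - d + d) := by
      rwa [Nat.sub_add_cancel hdc.le, ← zero_add c, h.periodic_edge]
    obtain ⟨F', w', h'⟩ := (h.rotate d).exists_shortcut (d := c - d) (by omega) (by omega)
      (by simpa using hxd) hxc fun s hs hst => by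
        have := (h.modEq_of_vertex_eq hst).eq_of_lt_of_lt (by omega) (by omega)
        omega
    have := hshort _ _ _ h'
    omega
  · push Not at hw
    obtain ⟨F', w', h'⟩ := h.exists_shortcut hd0 hdc hx0 hxd hw
    have := hshort _ _ _ h'
    omega

lemma modEq_add_one_of_mem_inter (h : IsBergeCycle L c F w)
    (hshort : ∀ m F' w', IsBergeCycle L m F' w' → c ≤ m) {j k : ℕ} {x : V} (hj : x ∈ F j)
    (hk : x ∈ F k) (hjk : ¬ j ≡ k [MOD c]) : k ≡ j + 1 [MOD c] ∨ j ≡ k + 1 [MOD c] := by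
  wlog hlt : j % c < k % c generalizing j k
  · exact (this hk hj (fun h' => hjk h'.symm) (lt_of_le_of_ne (not_lt.1 hlt) (Ne.symm hjk))).symm
  have hc := h.two_le
  have hkc : k % c < c := Nat.mod_lt _ (by omega)
  rw [← h.periodic_edge.map_mod_nat] at hj hk
  rcases (h.rotate (j % c)).eq_one_or_eq_sub_one_of_mem_inter hshort (d := k % c - j % c)
    (by omega) (by omega) (by simpa using hj) (by rwa [Nat.sub_add_cancel hlt.le]) with hd | hd
  · left
    unfold Nat.ModEq
    rw [Nat.add_mod, Nat.mod_eq_of_lt (show 1 < c by omega),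
      Nat.mod_eq_of_lt (show j % c + 1 < c by omega)]
    omega
  · right
    unfold Nat.ModEq
    rw [Nat.add_mod, Nat.mod_eq_of_lt (show 1 < c by omega), show k % c + 1 = c by omega,
      Nat.mod_self]
    omega

lemma inter_eq_singleton (h : IsBergeCycle L c F w) (hlin : IsLinearHG L) (j : ℕ) :
    F j ∩ F (j + 1) = {w j} := by
  have hne : F j ≠ F (j + 1) := fun heq =>
    Nat.not_modEq_add_one h.two_le j (h.modEq_of_edge_eq heq)
  exact eq_singleton_iff_unique_mem.2 ⟨h.vertex_mem j, fun y hy =>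
    card_le_one.1 (hlin _ (h.edge_mem j) _ (h.edge_mem _) hne) _ hy _ (h.vertex_mem j)⟩

lemma three_le (h : IsBergeCycle L c F w) (hlin : IsLinearHG L) : 3 ≤ c := by
  by_contra hc
  obtain rfl : c = 2 := by have := h.two_le; omega
  have hw1 : w 1 ∈ F 0 ∩ F 1 := by
    rw [inter_comm, ← h.periodic_edge 0]
    exact h.vertex_mem 1
  rw [h.inter_eq_singleton hlin 0] at hw1
  exact absurd (h.modEq_of_vertex_eq (mem_singleton.1 hw1)) (by decide)

lemma eq_or_eq_of_mem_inter (h : IsBergeCycle L c F w) (hlin : IsLinearHG L)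
    (hshort : ∀ m F' w', IsBergeCycle L m F' w' → c ≤ m) {j k : ℕ} {x : V} (hj : x ∈ F j)
    (hk : x ∈ F k) (hjk : ¬ j ≡ k [MOD c]) : x = w j ∨ x = w k := by
  rcases h.modEq_add_one_of_mem_inter hshort hj hk hjk with hkj | hjk'
  · rw [h.edge_eq_of_modEq hkj] at hk
    exact .inl (mem_singleton.1 (h.inter_eq_singleton hlin j ▸ mem_inter.2 ⟨hj, hk⟩))
  · rw [h.edge_eq_of_modEq hjk'] at hj
    exact .inr (mem_singleton.1 (h.inter_eq_singleton hlin k ▸ mem_inter.2 ⟨hk, hj⟩))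

lemma card_image_range (h : IsBergeCycle L c F w) : ((range c).image F).card = c := by
  rw [card_image_of_injOn, card_range]
  intro j hj k hk hjk
  exact (h.modEq_of_edge_eq hjk).eq_of_lt_of_lt (by simpa using hj) (by simpa using hk)

/-- Each edge of a shortest Berge cycle contributes exactly `r - 1` new vertices: the
`F j \ {w j}` are disjoint and cover the cycle, since `w j ∈ F (j + 1)`. -/
lemma card_biUnion_image (h : IsBergeCycle L c F w) (hlin : IsLinearHG L) {r : ℕ}
    (hunif : ∀ e ∈ L, e.card = r) (hshort : ∀ m F' w', IsBergeCycle L m F' w' → c ≤ m) :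
    (((range c).image F).biUnion id).card = (r - 1) * c := by
  have hc := h.two_le
  have hcover :
      ((range c).image F).biUnion id = (range c).biUnion fun j => (F j).erase (w j) := by
    rw [image_biUnion]
    refine Subset.antisymm (fun x hx => ?_) (biUnion_mono fun j _ => erase_subset _ _)
    obtain ⟨j, hj, hxj⟩ := mem_biUnion.1 hx
    by_cases hxw : x = w j
    · subst hxw
      refine mem_biUnion.2 ⟨(j + 1) % c, mem_range.2 (Nat.mod_lt _ (by omega)), ?_⟩
      rw [h.periodic_edge.map_mod_nat, h.periodic_vertex.map_mod_nat]
      exact mem_erase.2 ⟨fun heq => Nat.not_modEq_add_one hc j (h.modEq_of_vertex_eq heq),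
        (mem_inter.1 (h.vertex_mem j)).2⟩
    · exact mem_biUnion.2 ⟨j, hj, mem_erase.2 ⟨hxw, hxj⟩⟩
  rw [hcover, card_biUnion]
  · rw [sum_congr rfl fun j _ => by
      rw [card_erase_of_mem (mem_inter.1 (h.vertex_mem j)).1, hunif _ (h.edge_mem j)]]
    simp [mul_comm]
  · intro j hj k hk hjk
    rw [Function.onFun, disjoint_left]
    intro x hxj hxk
    have hjk' : ¬ j ≡ k [MOD c] := fun h' =>
      hjk (h'.eq_of_lt_of_lt (by simpa using hj) (by simpa using hk))
    rcases h.eq_or_eq_of_mem_inter hlin hshort (mem_erase.1 hxj).2 (mem_erase.1 hxk).2 hjk' with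
      hx | hx
    · exact (mem_erase.1 hxj).1 hx
    · exact (mem_erase.1 hxk).1 hx

lemma isLinCycle (h : IsBergeCycle L c F w) (hlin : IsLinearHG L) {r : ℕ}
    (hunif : ∀ e ∈ L, e.card = r) (hshort : ∀ m F' w', IsBergeCycle L m F' w' → c ≤ m)
    (hL : (range c).image F = L) : IsLinCycle r L := by
  have hcard : L.card = c := hL ▸ h.card_image_range
  refine ⟨F, ?_, ?_, ?_, ?_, ?_⟩ <;> rw [hcard]
  · exact hL.symm
  · exact fun j hj k hk hjk heq => hjk ((h.modEq_of_edge_eq heq).eq_of_lt_of_lt hj hk)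
  · exact fun j _ => hunif _ (h.edge_mem j)
  · intro j _
    rw [h.periodic_edge.map_mod_nat, h.inter_eq_singleton hlin, card_singleton]
  · intro j hj k hk hjk hkj hjk'
    refine eq_empty_iff_forall_notMem.2 fun x hx => ?_
    rcases h.modEq_add_one_of_mem_inter hshort (mem_inter.1 hx).1 (mem_inter.1 hx).2
      (fun h' => hjk (h'.eq_of_lt_of_lt hj hk)) with h' | h'
    · exact hkj (by rw [← h', Nat.mod_eq_of_lt hk])
    · exact hjk' (by rw [← h', Nat.mod_eq_of_lt hj])

end IsBergeCycle

end Berge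

theorem type_i_configuration_is_linear_cycle_general {V : Type*} [DecidableEq V]
    (r i : ℕ) (hi : 3 ≤ i)
    (L : Finset (Finset V)) (hlin : IsLinearHG L) (hunif : ∀ e ∈ L, e.card = r)
    (hcard : L.card = i) (hv : (L.biUnion id).card ≤ (r - 1) * i)
    (hmin : ∀ G : Finset (Finset V), G ⊆ L → G ≠ L → 3 ≤ G.card → G.card < i →
      ¬ ((G.biUnion id).card ≤ (r - 1) * G.card)) :
    IsLinCycle r L ∧ (L.biUnion id).card = (r - 1) * i := by
  subst hcard
  have hdeg : ∀ f ∈ L, 2 ≤ (f ∩ (L.erase f).biUnion id).card := fun f hf =>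
    two_le_card_inter_biUnion_erase hf (hunif f hf) hv
      (sub_one_mul_lt_card_biUnion_erase hlin hunif hi hmin hf)
  obtain ⟨c, F, w, hcyc, hshort⟩ := exists_shortest_isBergeCycle (card_pos.1 (by omega)) hdeg
  have hsub : (range c).image F ⊆ L := image_subset_iff.2 fun j _ => hcyc.edge_mem j
  have hvF := hcyc.card_biUnion_image hlin hunif hshort
  have hFL : (range c).image F = L := by
    by_contra hne
    have hlt := card_lt_card (ssubset_of_subset_of_ne hsub hne)
    rw [hcyc.card_image_range] at hlt
    exact hmin _ hsub hne (by rw [hcyc.card_image_range]; exact hcyc.three_le hlin)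
      (by rw [hcyc.card_image_range]; omega) (by rw [hvF, hcyc.card_image_range])
  exact ⟨hcyc.isLinCycle hlin hunif hshort hFL, by rw [← hFL, hvF, hcyc.card_image_range]⟩

/-- Remark 3.2: a Type-`i` configuration — a linear `r`-graph with `i` edges on at most
`(r-1)i` vertices containing no proper subhypergraph with `3 ≤ e_G < i` edges on at
most `(r-1)e_G` vertices — is a linear cycle `C_i^r`, spanning exactly `(r-1)i` vertices. -/
theorem type_i_configuration_is_linear_cycle {V : Type*} [DecidableEq V]
    (r ℓ i : ℕ) (hr : 3 ≤ r) (hℓ : 3 ≤ ℓ) (hi : 3 ≤ i) (hiℓ : i ≤ ℓ)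
    (L : Finset (Finset V)) (hlin : IsLinearHG L) (hunif : ∀ e ∈ L, e.card = r)
    (hcard : L.card = i) (hv : (L.biUnion id).card ≤ (r - 1) * i)
    (hmin : ∀ G : Finset (Finset V), G ⊆ L → G ≠ L → 3 ≤ G.card → G.card < i →
      ¬ ((G.biUnion id).card ≤ (r - 1) * G.card)) :
    IsLinCycle r L ∧ (L.biUnion id).card = (r - 1) * i :=
  type_i_configuration_is_linear_cycle_general r i hi L hlin hunif hcard hv hmin
end
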